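/- arXiv:2102.02953 — 3 statements merged into one kernel-verified Lean document; each statement's English description precedes it below -/
import Mathlib

section
/- (Extended fundamental lemma, first part.) Let (u^i, x^i, y^i), i = 1,...,τ, be input-state-output trajectories of x_{t+1} = A x_t + B u_t of lengths T^i. If the inputs {u^i} are collectively persistently exciting of order δ + L with δ ≥ deg(minimal polynomial of A), then the column span of the stacked matrix [H_1(x^1_{[0,T^1-L]}) ... H_1(x^τ_{[0,T^τ-L]}); H_L(u^1_{[0,T^1-1]}) ... H_L(u^τ_{[0,T^τ-1]})] equals (R + K[x_0^1, ..., x_0^τ]) × ℝ^{mL}, where R is the controllable subspace and K[x_0^1,...,x_0^τ] is the smallest A-invariant subspace containing the initial states. -/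
/-!
`R + K` is `A`-invariant and contains `B u` and every initial state, hence every state, which
gives `⊆`. For `⊇`, take a functional `(η, ξ)` vanishing on all data columns:
`η x(c) + ∑ₖ ξₖ u(c+k) = 0` on every window. Expanding
`x(c+j) = Aʲ x(c) + ∑_{t<j} A^(j-1-t) B u(c+t)` for `j ≤ δ` and combining these shifted relations
with the coefficients of a monic `p` of degree `δ` with `p(A) = 0` eliminates the state, leaving a
relation on input windows of length `δ + L`. Persistency of excitation kills its coefficients;
as `p` is monic these are a unitriangular transform of the row
`(η A^(δ-1) B, …, η B, ξ₀, …, ξ_(L-1))`, which therefore vanishes. So `ξ = 0`, `η` annihilates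
`Aʲ B` for `j < δ`, hence for all `j`, and the windows at time `0` give `η Aʲ x₀ = 0`.
-/

open Matrix Finset Polynomial

section IsIntegral

variable {K S : Type*} [Field K] [Ring S] [Algebra K S] {a : S}

theorem IsIntegral.exists_monic_natDegree_eq_aeval_eq_zero (ha : IsIntegral K a) {δ : ℕ}
    (hδ : (minpoly K a).natDegree ≤ δ) : ∃ p : K[X], p.Monic ∧ p.natDegree = δ ∧ aeval a p = 0 := by
  refine ⟨minpoly K a * X ^ (δ - (minpoly K a).natDegree),
    (minpoly.monic ha).mul (monic_X_pow _), ?_, by simp⟩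
  rw [(minpoly.monic ha).natDegree_mul (monic_X_pow _), natDegree_X_pow]
  omega

theorem IsIntegral.pow_mem_span_pow (ha : IsIntegral K a) {N : ℕ}
    (hN : (minpoly K a).natDegree ≤ N) (p : ℕ) :
    a ^ p ∈ Submodule.span K (Set.range fun j : Fin N => a ^ (j : ℕ)) := by
  refine Submodule.span_mono ?_ (ha.mem_span_pow ⟨X ^ p, by simp⟩)
  rintro _ ⟨j, rfl⟩
  exact ⟨Fin.castLE hN j, rfl⟩

end IsIntegral

theorem eq_zero_of_backward_recurrence {R M : Type*} [Semiring R] [AddCommMonoid M] [Module R M]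
    {c : ℕ → R} {δ N : ℕ} (hc : c δ = 1) {G : ℕ → M} (hG : ∀ e, N ≤ e → G e = 0)
    (h : ∀ e < N, ∑ j ∈ range (δ + 1), c j • G (e + δ - j) = 0) (e : ℕ) : G e = 0 := by
  suffices ∀ k e, N ≤ e + k → G e = 0 from this N e (by omega)
  intro k
  induction k with
  | zero => exact fun e he => hG e he
  | succ k ih =>
    intro e he
    by_cases heN : N ≤ e
    · exact hG e heN
    have hrec := h e (by omega)
    rwa [sum_range_succ, hc, one_smul, Nat.add_sub_cancel,
      sum_eq_zero fun j hj => by rw [ih _ (by simp at hj; omega), smul_zero], zero_add] at hrec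

namespace Matrix

variable {K : Type*} [Field K] {n m ι : Type*} [Fintype n] [DecidableEq n] [Fintype m]

theorem natDegree_minpoly_le_card (A : Matrix n n K) :
    (minpoly K A).natDegree ≤ Fintype.card n := by
  simpa using natDegree_le_of_dvd A.minpoly_dvd_charpoly A.charpoly_monic.ne_zero

def krylov (A : Matrix n n K) (w : ι → n → K) (N : ℕ) : Submodule K (n → K) :=
  Submodule.span K {v | ∃ j < N, ∃ i, v = (A ^ j) *ᵥ w i}

variable {A : Matrix n n K} {w : ι → n → K} {N : ℕ}

theorem pow_mulVec_mem_krylov (hN : (minpoly K A).natDegree ≤ N) (p : ℕ) (i : ι) :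
    (A ^ p) *ᵥ w i ∈ krylov A w N := by
  obtain ⟨c, hc⟩ :=
    Submodule.mem_span_range_iff_exists_fun K |>.mp (A.isIntegral.pow_mem_span_pow hN p)
  rw [← hc, sum_mulVec]
  refine Submodule.sum_mem _ fun j _ => ?_
  rw [smul_mulVec]
  exact Submodule.smul_mem _ _ (Submodule.subset_span ⟨j, j.2, i, rfl⟩)

theorem krylov_le_krylov (hN : (minpoly K A).natDegree ≤ N) (N' : ℕ) :
    krylov A w N' ≤ krylov A w N :=
  Submodule.span_le.2 <| by
    rintro _ ⟨j, -, i, rfl⟩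
    exact pow_mulVec_mem_krylov hN j i

theorem mulVec_mem_krylov (hN : (minpoly K A).natDegree ≤ N) {v : n → K}
    (hv : v ∈ krylov A w N) : A *ᵥ v ∈ krylov A w N := by
  suffices krylov A w N ≤ (krylov A w N).comap A.mulVecLin from this hv
  refine Submodule.span_le.2 ?_
  rintro _ ⟨j, -, i, rfl⟩
  simpa [mulVec_mulVec, ← pow_succ'] using pow_mulVec_mem_krylov hN (j + 1) i

theorem mulVec_mem_krylov_columns (hN : (minpoly K A).natDegree ≤ N) (B : Matrix n m K)
    (v : m → K) : B *ᵥ v ∈ krylov A (fun e k => B k e) N := by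
  rw [mulVec_eq_sum]
  refine Submodule.sum_mem _ fun e _ => ?_
  rw [op_smul_eq_smul]
  have hBe := pow_mulVec_mem_krylov (w := fun e k => B k e) hN 0 e
  rw [pow_zero, one_mulVec] at hBe
  exact Submodule.smul_mem _ (v e) hBe

theorem mulVec_mem_krylov_sup (hN : (minpoly K A).natDegree ≤ N) {ι' : Type*} {w' : ι' → n → K}
    {v : n → K} (hv : v ∈ krylov A w N ⊔ krylov A w' N) :
    A *ᵥ v ∈ krylov A w N ⊔ krylov A w' N := by
  obtain ⟨y, hy, z, hz, rfl⟩ := Submodule.mem_sup.1 hv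
  rw [mulVec_add]
  exact Submodule.add_mem_sup (mulVec_mem_krylov hN hy) (mulVec_mem_krylov hN hz)

end Matrix

section MarkovRow

variable {K : Type*} [Field K] {n m : Type*} [Fintype n] [DecidableEq n] {L : ℕ}

/-- The row `(η A^(δ-1) B, …, η A B, η B, ξ 0, …, ξ (L-1), 0, 0, …)`. -/
def markovRow (A : Matrix n n K) (B : Matrix n m K) (η : n → K) (ξ : Fin L → m → K) (δ e : ℕ) :
    m → K :=
  if e < δ then η ᵥ* (A ^ (δ - 1 - e) * B) else if h : e - δ < L then ξ ⟨e - δ, h⟩ else 0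

variable {A : Matrix n n K} {B : Matrix n m K} {η : n → K} {ξ : Fin L → m → K} {δ : ℕ}

theorem markovRow_of_lt {e : ℕ} (he : e < δ) :
    markovRow A B η ξ δ e = η ᵥ* (A ^ (δ - 1 - e) * B) :=
  if_pos he

theorem markovRow_add (k : Fin L) : markovRow A B η ξ δ (δ + k) = ξ k := by
  simp [markovRow]

theorem markovRow_of_le {e : ℕ} (he : δ + L ≤ e) : markovRow A B η ξ δ e = 0 := by
  rw [markovRow, if_neg (by omega), dif_neg (by omega)]

end MarkovRow

section LinearSystem

variable {K : Type*} [Field K] {n m : Type*} [Fintype n] [Fintype m]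

def IsTrajectory (A : Matrix n n K) (B : Matrix n m K) (T : ℕ) (x : ℕ → n → K)
    (u : ℕ → m → K) : Prop :=
  ∀ t, t + 1 < T → x (t + 1) = A *ᵥ x t + B *ᵥ u t

variable {A : Matrix n n K} {B : Matrix n m K} {T : ℕ} {x : ℕ → n → K} {u : ℕ → m → K}

theorem IsTrajectory.state_mem (h : IsTrajectory A B T x u) {W : Submodule K (n → K)}
    (hA : ∀ v ∈ W, A *ᵥ v ∈ W) (hB : ∀ v, B *ᵥ v ∈ W) (hx₀ : x 0 ∈ W) {t : ℕ} (ht : t < T) :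
    x t ∈ W := by
  induction t with
  | zero => exact hx₀
  | succ t ih => rw [h t ht]; exact W.add_mem (hA _ (ih (by omega))) (hB _)

variable [DecidableEq n] {L δ : ℕ} {η : n → K} {ξ : Fin L → m → K}

theorem IsTrajectory.state_eq (h : IsTrajectory A B T x u) {c j : ℕ} (hcj : c + j < T) :
    x (c + j) = (A ^ j) *ᵥ x c + ∑ t ∈ range j, (A ^ (j - 1 - t) * B) *ᵥ u (c + t) := by
  induction j with
  | zero => simp
  | succ j ih =>
    have hsum : A *ᵥ ∑ t ∈ range j, (A ^ (j - 1 - t) * B) *ᵥ u (c + t) =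
        ∑ t ∈ range j, (A ^ (j - t) * B) *ᵥ u (c + t) := by
      rw [mulVec_sum]
      refine sum_congr rfl fun t ht => ?_
      rw [mulVec_mulVec, ← Matrix.mul_assoc, ← pow_succ', show j - 1 - t + 1 = j - t by
        simp at ht; omega]
    rw [← add_assoc, h _ (by omega), ih (by omega), mulVec_add, mulVec_mulVec, ← pow_succ',
      hsum, sum_range_succ, Nat.add_sub_cancel, Nat.sub_self, pow_zero, Matrix.one_mul, add_assoc]

/-- The window relation at time `c + j`, with the state expanded from time `c`. -/
theorem IsTrajectory.window_shift_eq_zero (h : IsTrajectory A B T x u)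
    (hwin : ∀ c, c + L ≤ T → η ⬝ᵥ x c + ∑ k : Fin L, ξ k ⬝ᵥ u (c + k) = 0) (hL : 0 < L)
    {j c : ℕ} (hj : j ≤ δ) (hc : c + j + L ≤ T) :
    (η ᵥ* A ^ j) ⬝ᵥ x c +
      ∑ t ∈ range (δ + L), markovRow A B η ξ δ (t + δ - j) ⬝ᵥ u (c + t) = 0 := by
  have hpast : ∑ t ∈ range j, markovRow A B η ξ δ (t + δ - j) ⬝ᵥ u (c + t) =
      ∑ t ∈ range j, η ⬝ᵥ (A ^ (j - 1 - t) * B) *ᵥ u (c + t) := by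
    refine sum_congr rfl fun t ht => ?_
    rw [mem_range] at ht
    rw [markovRow_of_lt (by omega), dotProduct_mulVec,
      show δ - 1 - (t + δ - j) = j - 1 - t by omega]
  have hfuture : ∑ k ∈ range (L + (δ - j)),
      markovRow A B η ξ δ (j + k + δ - j) ⬝ᵥ u (c + (j + k)) =
        ∑ k : Fin L, ξ k ⬝ᵥ u (c + j + k) := by
    rw [sum_range_add, sum_eq_zero (s := range (δ - j)) fun k _ => by
        rw [markovRow_of_le (by omega), zero_dotProduct],
      add_zero, ← Fin.sum_univ_eq_sum_range
        (fun k => markovRow A B η ξ δ (j + k + δ - j) ⬝ᵥ u (c + (j + k)))]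
    refine sum_congr rfl fun k _ => ?_
    rw [show j + k + δ - j = δ + k by omega, markovRow_add, add_assoc]
  have hw := hwin (c + j) (by omega)
  rw [h.state_eq (by omega), dotProduct_add, dotProduct_mulVec, dotProduct_sum, add_assoc] at hw
  rwa [show δ + L = j + (L + (δ - j)) by omega, sum_range_add, hpast, hfuture]

theorem IsTrajectory.sum_markovRow_conv_eq_zero (h : IsTrajectory A B T x u)
    (hwin : ∀ c, c + L ≤ T → η ⬝ᵥ x c + ∑ k : Fin L, ξ k ⬝ᵥ u (c + k) = 0) (hL : 0 < L)
    {p : K[X]} (hp : p.natDegree ≤ δ) (hpA : aeval A p = 0) {c : ℕ} (hc : c + δ + L ≤ T) :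
    ∑ t ∈ range (δ + L),
      (∑ j ∈ range (δ + 1), p.coeff j • markovRow A B η ξ δ (t + δ - j)) ⬝ᵥ u (c + t) = 0 := by
  calc _ = ∑ j ∈ range (δ + 1),
        p.coeff j * ∑ t ∈ range (δ + L), markovRow A B η ξ δ (t + δ - j) ⬝ᵥ u (c + t) := by
        simp_rw [sum_dotProduct, smul_dotProduct, smul_eq_mul, mul_sum]
        exact sum_comm
    _ = ∑ j ∈ range (δ + 1), p.coeff j * -((η ᵥ* A ^ j) ⬝ᵥ x c) := by
        refine sum_congr rfl fun j hj => ?_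
        rw [eq_neg_of_add_eq_zero_right (h.window_shift_eq_zero hwin hL (by simp at hj; omega)
          (by simp at hj; omega))]
    _ = -((η ᵥ* aeval A p) ⬝ᵥ x c) := by
        rw [aeval_eq_sum_range' (by omega : p.natDegree < δ + 1), vecMul_sum, sum_dotProduct,
          ← sum_neg_distrib]
        simp [vecMul_smul, smul_dotProduct]
    _ = 0 := by simp [hpA]

end LinearSystem

section CollectivePersistentExcitation

variable {K : Type*} [Field K] {n m ι : Type*} [Fintype n] [DecidableEq n] [Fintype m]

/-- The mosaic-Hankel matrix of depth `d` of the inputs has full row rank, stated as triviality of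
its left kernel. -/
def CollectivelyPersistentlyExciting (T : ι → ℕ) (u : ι → ℕ → m → K) (d : ℕ) : Prop :=
  ∀ ζ : Fin d → m → K, (∀ i c, c + d ≤ T i → ∑ k : Fin d, ζ k ⬝ᵥ u i (c + k) = 0) → ζ = 0

variable {A : Matrix n n K} {B : Matrix n m K} {T : ι → ℕ} {x : ι → ℕ → n → K}
  {u : ι → ℕ → m → K} {L δ : ℕ} {η : n → K} {ξ : Fin L → m → K}

theorem markovRow_eq_zero (hdyn : ∀ i, IsTrajectory A B (T i) (x i) (u i)) (hL : 0 < L)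
    (hδ : (minpoly K A).natDegree ≤ δ) (hpe : CollectivelyPersistentlyExciting T u (δ + L))
    (hwin : ∀ i c, c + L ≤ T i → η ⬝ᵥ x i c + ∑ k : Fin L, ξ k ⬝ᵥ u i (c + k) = 0) :
    markovRow A B η ξ δ = 0 := by
  obtain ⟨p, hmonic, hdeg, hpA⟩ := A.isIntegral.exists_monic_natDegree_eq_aeval_eq_zero hδ
  have hconv := hpe (fun t => ∑ j ∈ range (δ + 1), p.coeff j • markovRow A B η ξ δ (t + δ - j))
    fun i c hc => by
      rw [Fin.sum_univ_eq_sum_range (fun t =>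
        (∑ j ∈ range (δ + 1), p.coeff j • markovRow A B η ξ δ (t + δ - j)) ⬝ᵥ u i (c + t))]
      exact (hdyn i).sum_markovRow_conv_eq_zero (hwin i) hL hdeg.le hpA (by omega)
  funext e
  exact eq_zero_of_backward_recurrence (hdeg ▸ hmonic.coeff_natDegree)
    (fun e he => markovRow_of_le he) (fun t ht => congrFun hconv ⟨t, ht⟩) e

theorem dotProduct_eq_zero_of_mem_krylov_sup (hdyn : ∀ i, IsTrajectory A B (T i) (x i) (u i))
    (hL : 0 < L) (hδ : (minpoly K A).natDegree ≤ δ) (hlen : ∀ i, δ + L ≤ T i)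
    (hwin : ∀ i c, c + L ≤ T i → η ⬝ᵥ x i c + ∑ k : Fin L, ξ k ⬝ᵥ u i (c + k) = 0)
    (hM : markovRow A B η ξ δ = 0) {N : ℕ} {v : n → K}
    (hv : v ∈ krylov A (fun e k => B k e) N ⊔ krylov A (fun i => x i 0) N) : η ⬝ᵥ v = 0 := by
  suffices krylov A (fun e k => B k e) δ ⊔ krylov A (fun i => x i 0) δ ≤
      LinearMap.ker (dotProductEquiv K n η) from
    this (sup_le_sup (krylov_le_krylov hδ N) (krylov_le_krylov hδ N) hv)
  refine sup_le (Submodule.span_le.2 ?_) (Submodule.span_le.2 ?_)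
  · rintro _ ⟨r, hr, e, rfl⟩
    have hMr := congrFun (congrFun hM (δ - 1 - r)) e
    rw [markovRow_of_lt (by omega), show δ - 1 - (δ - 1 - r) = r by omega, ← vecMul_vecMul] at hMr
    rw [SetLike.mem_coe, LinearMap.mem_ker, dotProductEquiv_apply_apply, dotProduct_mulVec]
    exact hMr
  · rintro _ ⟨j, hj, i, rfl⟩
    have hw := (hdyn i).window_shift_eq_zero (hwin i) hL hj.le (c := 0) (by have := hlen i; omega)
    simpa [hM, dotProduct_mulVec] using hw

end CollectivePersistentExcitation

theorem Module.Dual.exists_eq_dotProduct_add_sum {K n m ι : Type*} [CommSemiring K] [Fintype n]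
    [DecidableEq n] [Fintype m] [DecidableEq m] [Fintype ι] [DecidableEq ι]
    (φ : Module.Dual K ((n → K) × (ι → m → K))) :
    ∃ (η : n → K) (ξ : ι → m → K), ∀ a b, φ (a, b) = η ⬝ᵥ a + ∑ k, ξ k ⬝ᵥ b k := by
  refine ⟨(dotProductEquiv K n).symm (φ ∘ₗ LinearMap.inl K _ _), fun k =>
    (dotProductEquiv K m).symm (φ ∘ₗ LinearMap.inr K _ _ ∘ₗ LinearMap.single K (fun _ => m → K) k),
    fun a b => ?_⟩
  simp only [← dotProductEquiv_apply_apply, LinearEquiv.apply_symm_apply, LinearMap.comp_apply,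
    LinearMap.coe_single, ← map_sum, ← map_add, LinearMap.inl_apply, LinearMap.inr_apply]
  congr 1
  ext <;> simp [Prod.fst_sum, Prod.snd_sum, Finset.univ_sum_single]

theorem extended_fundamental_lemma_part_one_general
    (n m L δ τ : ℕ) (hL : 0 < L)
    (A : Matrix (Fin n) (Fin n) ℝ) (B : Matrix (Fin n) (Fin m) ℝ)
    (T : Fin τ → ℕ)
    (u : Fin τ → ℕ → Fin m → ℝ) (x : Fin τ → ℕ → Fin n → ℝ)
    (hdyn : ∀ i t, t + 1 < T i →
      x i (t + 1) = A.mulVec (x i t) + B.mulVec (u i t))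
    (hδ : (minpoly ℝ A).natDegree ≤ δ)
    (hlen : ∀ i, δ + L ≤ T i)
    -- collective persistency of excitation of order δ + L:
    -- the mosaic-Hankel matrix of depth δ + L has trivial left kernel
    (hpe : ∀ ξ : Fin (δ + L) → Fin m → ℝ,
      (∀ i : Fin τ, ∀ c : ℕ, c + (δ + L) ≤ T i →
        ∑ k : Fin (δ + L), ξ k ⬝ᵥ u i (c + k) = 0) → ξ = 0) :
    Submodule.span ℝ
      {v : (Fin n → ℝ) × (Fin L → Fin m → ℝ) | ∃ i : Fin τ, ∃ c : ℕ,
        c + L ≤ T i ∧ v = (x i c, fun k : Fin L => u i (c + (k : ℕ)))} =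
    Submodule.prod
      ((Submodule.span ℝ {v : Fin n → ℝ | ∃ j < n, ∃ i : Fin m,
          v = (A ^ j).mulVec (fun k => B k i)}) ⊔
       (Submodule.span ℝ {v : Fin n → ℝ | ∃ j < n, ∃ i : Fin τ,
          v = (A ^ j).mulVec (x i 0)}))
      (⊤ : Submodule ℝ (Fin L → Fin m → ℝ)) := by
  have htraj : ∀ i, IsTrajectory A B (T i) (x i) (u i) := hdyn
  have hn : (minpoly ℝ A).natDegree ≤ n := by simpa using A.natDegree_minpoly_le_card
  apply le_antisymm
  · refine Submodule.span_le.2 ?_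
    rintro _ ⟨i, c, hc, rfl⟩
    refine ⟨(htraj i).state_mem (W := krylov A (fun e k => B k e) n ⊔ krylov A (fun i => x i 0) n)
      (fun v => mulVec_mem_krylov_sup hn) (fun v => Submodule.mem_sup_left
        (mulVec_mem_krylov_columns hn B v)) (Submodule.mem_sup_right ?_) (by omega), trivial⟩
    simpa using pow_mulVec_mem_krylov (w := fun i => x i 0) hn 0 i
  · rw [← Subspace.dualAnnihilator_le_dualAnnihilator_iff]
    intro φ hφ
    obtain ⟨η, ξ, hφη⟩ := φ.exists_eq_dotProduct_add_sum
    have hwin : ∀ i c, c + L ≤ T i → η ⬝ᵥ x i c + ∑ k, ξ k ⬝ᵥ u i (c + k) = 0 := fun i c hc => by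
      rw [← hφη]
      exact (Submodule.mem_dualAnnihilator φ).1 hφ _ (Submodule.subset_span ⟨i, c, hc, rfl⟩)
    have hM := markovRow_eq_zero htraj hL hδ hpe hwin
    have hξ : ξ = 0 := funext fun k => by simpa [markovRow_add] using congrFun hM (δ + k)
    refine (Submodule.mem_dualAnnihilator φ).2 ?_
    rintro ⟨a, b⟩ ⟨ha, -⟩
    simp [hφη, dotProduct_eq_zero_of_mem_krylov_sup htraj hL hδ hlen hwin hM ha, hξ]

/-- extended fundamental lemma, first part: under collective
persistency of excitation of order δ + L with δ ≥ deg(minpoly A), the column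
span of the stacked state/input mosaic-Hankel matrix equals
(R + K[x₀¹,...,x₀^τ]) × ℝ^{mL}. -/
theorem extended_fundamental_lemma_part_one
    (n m L δ τ : ℕ) (hL : 0 < L) (hδpos : 0 < δ)
    (A : Matrix (Fin n) (Fin n) ℝ) (B : Matrix (Fin n) (Fin m) ℝ)
    (T : Fin τ → ℕ)
    (u : Fin τ → ℕ → Fin m → ℝ) (x : Fin τ → ℕ → Fin n → ℝ)
    (hdyn : ∀ i t, t + 1 < T i →
      x i (t + 1) = A.mulVec (x i t) + B.mulVec (u i t))
    (hδ : (minpoly ℝ A).natDegree ≤ δ)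
    (hlen : ∀ i, δ + L ≤ T i)
    -- collective persistency of excitation of order δ + L:
    -- the mosaic-Hankel matrix of depth δ + L has trivial left kernel
    (hpe : ∀ ξ : Fin (δ + L) → Fin m → ℝ,
      (∀ i : Fin τ, ∀ c : ℕ, c + (δ + L) ≤ T i →
        ∑ k : Fin (δ + L), ξ k ⬝ᵥ u i (c + k) = 0) → ξ = 0) :
    Submodule.span ℝ
      {v : (Fin n → ℝ) × (Fin L → Fin m → ℝ) | ∃ i : Fin τ, ∃ c : ℕ,
        c + L ≤ T i ∧ v = (x i c, fun k : Fin L => u i (c + (k : ℕ)))} =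
    Submodule.prod
      ((Submodule.span ℝ {v : Fin n → ℝ | ∃ j < n, ∃ i : Fin m,
          v = (A ^ j).mulVec (fun k => B k i)}) ⊔
       (Submodule.span ℝ {v : Fin n → ℝ | ∃ j < n, ∃ i : Fin τ,
          v = (A ^ j).mulVec (x i 0)}))
      (⊤ : Submodule ℝ (Fin L → Fin m → ℝ)) :=
  extended_fundamental_lemma_part_one_general n m L δ τ hL A B T u x hdyn hδ hlen hpe
end

section
/- (Extended fundamental lemma, second part, necessity.) If (ū_{[0,L-1]}, ȳ_{[0,L-1]}) = [H_L(u^1) ... H_L(u^τ); H_L(y^1) ... H_L(y^τ)] g for some g, where (u^i, x^i, y^i) are trajectories of the LTI system (A, B, C, D), then there exists a state trajectory x̄_{[0,L-1]} with x̄_0 ∈ R + K[x_0^1, ..., x_0^τ] such that (ū, x̄, ȳ) is an input-state-output trajectory of the system; in particular x̄_0 = [H_1(x^1_{[0,T^1-L]}) ... H_1(x^τ_{[0,T^τ-L]})] g. -/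
/-!
Linear combinations of windows of trajectories are trajectories, so `g` applied to the windows
of the data gives the trajectory `(ū, x̄, ȳ)` with `x̄ₜ = Σⱼ gⱼ x^{iⱼ}_{cⱼ + t}`. Every data state
lies in `R + K`: this subspace contains `range B` and all `x^i_0`, and it is `A`-invariant because,
by Cayley–Hamilton, the powers `Aʲ` with `j < n` span all powers of `A`.
-/

open Matrix Finset Polynomial

section Trajectory

variable {R : Type*} [CommSemiring R] {n m p : Type*} [Fintype n] [Fintype m]
  {A : Matrix n n R} {B : Matrix n m R} {C : Matrix p n R} {D : Matrix p m R} {T : ℕ}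

/-- Only the times `t < T` are constrained. -/
structure IsTrajectory_s13 (A : Matrix n n R) (B : Matrix n m R) (C : Matrix p n R)
    (D : Matrix p m R) (T : ℕ) (u : ℕ → m → R) (x : ℕ → n → R) (y : ℕ → p → R) : Prop where
  step : ∀ t, t + 1 < T → x (t + 1) = A *ᵥ x t + B *ᵥ u t
  output : ∀ t, t < T → y t = C *ᵥ x t + D *ᵥ u t

namespace IsTrajectory_s13

variable {u u' : ℕ → m → R} {x : ℕ → n → R} {y y' : ℕ → p → R}

theorem shift (h : IsTrajectory_s13 A B C D T u x y) {s L : ℕ} (hsL : s + L ≤ T) :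
    IsTrajectory_s13 A B C D L (fun t => u (s + t)) (fun t => x (s + t)) (fun t => y (s + t)) where
  step t ht := h.step (s + t) (by omega)
  output t ht := h.output (s + t) (by omega)

theorem sum_smul {κ : Type*} [Fintype κ] {u : κ → ℕ → m → R} {x : κ → ℕ → n → R}
    {y : κ → ℕ → p → R} (h : ∀ k, IsTrajectory_s13 A B C D T (u k) (x k) (y k)) (c : κ → R) :
    IsTrajectory_s13 A B C D T (fun t => ∑ k, c k • u k t) (fun t => ∑ k, c k • x k t)
      (fun t => ∑ k, c k • y k t) where
  step t ht := by
    simp only [mulVec_sum, mulVec_smul, ← sum_add_distrib, ← smul_add, (h _).step t ht]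
  output t ht := by
    simp only [mulVec_sum, mulVec_smul, ← sum_add_distrib, ← smul_add, (h _).output t ht]

theorem congr (h : IsTrajectory_s13 A B C D T u x y) (hu : ∀ t < T, u' t = u t)
    (hy : ∀ t < T, y' t = y t) : IsTrajectory_s13 A B C D T u' x y' where
  step t ht := by rw [hu t (by omega)]; exact h.step t ht
  output t ht := by rw [hu t ht, hy t ht]; exact h.output t ht

theorem state_mem_s13 {W : Submodule R (n → R)} (h : IsTrajectory_s13 A B C D T u x y)
    (hA : ∀ w ∈ W, A *ᵥ w ∈ W) (hB : ∀ v, B *ᵥ v ∈ W) (h0 : x 0 ∈ W) :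
    ∀ t < T, x t ∈ W
  | 0, _ => h0
  | t + 1, ht => by
    rw [h.step t ht]
    exact W.add_mem (hA _ (h.state_mem_s13 hA hB h0 t (by omega))) (hB _)

end IsTrajectory_s13

end Trajectory

section Krylov

variable {R : Type*} [CommRing R] {d : ℕ} {κ : Type*}

/-- For `f` the columns of `B` this is the reachable subspace `R`; for `f` the initial states
of the data it is `K`. -/
def krylovSpan (A : Matrix (Fin d) (Fin d) R) (f : κ → Fin d → R) : Submodule R (Fin d → R) :=
  Submodule.span R {v | ∃ j < d, ∃ i, v = (A ^ j) *ᵥ f i}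

theorem pow_mulVec_mem_krylovSpan [Nontrivial R] (A : Matrix (Fin d) (Fin d) R)
    (f : κ → Fin d → R) (k : ℕ) (i : κ) : (A ^ k) *ᵥ f i ∈ krylovSpan A f := by
  rw [pow_eq_aeval_mod_charpoly]
  by_cases h1 : A.charpoly = 1
  · simp [h1, modByMonic_one]
  have hdeg : (X ^ k %ₘ A.charpoly).natDegree < d := by
    simpa using natDegree_modByMonic_lt (X ^ k) A.charpoly_monic h1
  rw [aeval_eq_sum_range' hdeg, sum_mulVec]
  refine Submodule.sum_mem _ fun j hj => ?_
  rw [smul_mulVec]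
  exact Submodule.smul_mem _ _ (Submodule.subset_span ⟨j, mem_range.mp hj, i, rfl⟩)

theorem apply_mem_krylovSpan [Nontrivial R] (A : Matrix (Fin d) (Fin d) R)
    (f : κ → Fin d → R) (i : κ) : f i ∈ krylovSpan A f := by
  simpa using pow_mulVec_mem_krylovSpan A f 0 i

theorem mulVec_mem_krylovSpan [Nontrivial R] {A : Matrix (Fin d) (Fin d) R}
    {f : κ → Fin d → R} {v : Fin d → R} (hv : v ∈ krylovSpan A f) :
    A *ᵥ v ∈ krylovSpan A f := by
  refine (Submodule.span_le (p := (krylovSpan A f).comap A.mulVecLin)).mpr ?_ hv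
  rintro _ ⟨j, -, i, rfl⟩
  simpa [mulVec_mulVec, ← pow_succ'] using pow_mulVec_mem_krylovSpan A f (j + 1) i

theorem mulVec_mem_krylovSpan_transpose [Nontrivial R] [Fintype κ]
    (A : Matrix (Fin d) (Fin d) R) (B : Matrix (Fin d) κ R) (w : κ → R) :
    B *ᵥ w ∈ krylovSpan A (fun i => Bᵀ i) := by
  rw [mulVec_eq_sum]
  simp only [op_smul_eq_smul]
  exact Submodule.sum_mem _ fun i _ =>
    Submodule.smul_mem _ _ (apply_mem_krylovSpan A (fun i => Bᵀ i) i)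

theorem IsTrajectory_s13.state_mem_krylovSpan_sup [Nontrivial R] [Fintype κ] {m : Type*}
    [Fintype m] {A : Matrix (Fin d) (Fin d) R} {B : Matrix (Fin d) m R} {p : Type*}
    {C : Matrix p (Fin d) R} {D : Matrix p m R} {T : ℕ} {u : ℕ → m → R}
    {x : ℕ → Fin d → R} {y : ℕ → p → R} (h : IsTrajectory_s13 A B C D T u x y)
    {f : κ → Fin d → R} (h0 : x 0 ∈ krylovSpan A f) {t : ℕ} (ht : t < T) :
    x t ∈ krylovSpan A (fun i => Bᵀ i) ⊔ krylovSpan A f := by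
  refine h.state_mem_s13 (fun w hw => ?_) (fun v => Submodule.mem_sup_left ?_)
    (Submodule.mem_sup_right h0) t ht
  · obtain ⟨r, hr, k, hk, rfl⟩ := Submodule.mem_sup.mp hw
    rw [mulVec_add]
    exact Submodule.add_mem_sup (mulVec_mem_krylovSpan hr) (mulVec_mem_krylovSpan hk)
  · exact mulVec_mem_krylovSpan_transpose A B v

end Krylov

/-- extended fundamental lemma, necessity: any input-output pair
parameterizable by the measured data is a trajectory of the system with an
initial state x̄₀ = Σ g_j x^{i_j}_{c_j} ∈ R + K[x₀¹,...,x₀^τ]. -/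
theorem extended_fundamental_lemma_necessity
    (n m p L τ : ℕ) (hL : 0 < L)
    (A : Matrix (Fin n) (Fin n) ℝ) (B : Matrix (Fin n) (Fin m) ℝ)
    (C : Matrix (Fin p) (Fin n) ℝ) (D : Matrix (Fin p) (Fin m) ℝ)
    (T : Fin τ → ℕ) (hlen : ∀ i, L ≤ T i)
    (u : Fin τ → ℕ → Fin m → ℝ) (x : Fin τ → ℕ → Fin n → ℝ)
    (y : Fin τ → ℕ → Fin p → ℝ)
    (hdyn : ∀ i t, t + 1 < T i →
      x i (t + 1) = A.mulVec (x i t) + B.mulVec (u i t))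
    (hout : ∀ i t, t < T i → y i t = C.mulVec (x i t) + D.mulVec (u i t))
    (ubar : ℕ → Fin m → ℝ) (ybar : ℕ → Fin p → ℝ)
    (g : (Σ i : Fin τ, Fin (T i - L + 1)) → ℝ)
    (hu : ∀ k : Fin L, ubar k =
      ∑ j : (Σ i : Fin τ, Fin (T i - L + 1)), g j • u j.1 (j.2 + k))
    (hy : ∀ k : Fin L, ybar k =
      ∑ j : (Σ i : Fin τ, Fin (T i - L + 1)), g j • y j.1 (j.2 + k)) :
    ∃ xbar : ℕ → Fin n → ℝ,
      xbar 0 = ∑ j : (Σ i : Fin τ, Fin (T i - L + 1)), g j • x j.1 j.2 ∧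
      xbar 0 ∈
        (Submodule.span ℝ {v : Fin n → ℝ | ∃ j < n, ∃ i : Fin m,
            v = (A ^ j).mulVec (fun k => B k i)}) ⊔
        (Submodule.span ℝ {v : Fin n → ℝ | ∃ j < n, ∃ i : Fin τ,
            v = (A ^ j).mulVec (x i 0)}) ∧
      (∀ t, t + 1 < L →
        xbar (t + 1) = A.mulVec (xbar t) + B.mulVec (ubar t)) ∧
      (∀ t, t < L → ybar t = C.mulVec (xbar t) + D.mulVec (ubar t)) := by
  have htraj i : IsTrajectory_s13 A B C D (T i) (u i) (x i) (y i) := ⟨hdyn i, hout i⟩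
  have hwindow (j : Σ i : Fin τ, Fin (T i - L + 1)) : (j.2 : ℕ) + L ≤ T j.1 := by
    have := j.2.isLt; have := hlen j.1; omega
  have hbar := (IsTrajectory_s13.sum_smul (fun j => (htraj j.1).shift (hwindow j)) g).congr
    (fun t ht => hu ⟨t, ht⟩) (fun t ht => hy ⟨t, ht⟩)
  refine ⟨fun t => ∑ j, g j • x j.1 (j.2 + t), by simp only [add_zero], ?_, hbar.step,
    hbar.output⟩
  exact Submodule.sum_mem _ fun j _ => Submodule.smul_mem _ _ <|
    (htraj j.1).state_mem_krylovSpan_sup (apply_mem_krylovSpan A (fun i => x i 0) j.1)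
      (by have := hwindow j; omega)
end

section
/- (Corollary: online DeePC correctness.) Let (u_{[0,K-1]}, y_{[0,K-1]}) be an input-output trajectory of the LTI system (A,B,C,D), and suppose u_{[0,T-1]} is persistently exciting of order δ + L with δ ≥ deg(minimal polynomial of A) and L ≤ T ≤ K. Then for every 0 ≤ t ≤ K - L, there exists g ∈ ℝ^{T-L+1} with (u_{[t,t+L-1]}, y_{[t,t+L-1]}) = [H_L(u_{[0,T-1]}); H_L(y_{[0,T-1]})] g. Conversely, every (ū, ȳ) of this form is an input-output trajectory of the system. -/
/-!
Write `w s = (x s, u s, …, u (s + L - 1))` for the columns of the stacked data matrix. Since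
`δ ≥ deg (minpoly A)`, `A ^ δ = ∑ j < δ, c j • A ^ j`, and the state contributions cancel in
`w (s + δ) - ∑ j < δ, c j • w (s + j)`, which is therefore a linear function of the input window
`u s, …, u (s + δ + L - 1)` alone, independent of `s`. Persistency of excitation says that the input
windows of length `δ + L` inside `[0, T)` span all windows, so this difference always lies in the
span `W` of the columns `w c` with `c + L ≤ T`; by strong induction on `s`, every column `w s` with
`s + L ≤ K` lies in `W`. A combination of columns reproducing `w t` reproduces the whole window at
`t`, since states and outputs depend linearly on the initial state and the inputs; the converse is
the same linearity.
-/

open Matrix Finset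

open Polynomial in
theorem exists_pow_eq_sum_smul_pow_of_natDegree_minpoly_le {K S : Type*} [Field K] [Ring S]
    [Algebra K S] {a : S} (ha : IsIntegral K a) {δ : ℕ} (hδ : (minpoly K a).natDegree ≤ δ) :
    ∃ c : ℕ → K, a ^ δ = ∑ j ∈ range δ, c j • a ^ j := by
  set q := X ^ δ %ₘ minpoly K a
  refine ⟨q.coeff, ?_⟩
  have hq : aeval a q = a ^ δ := by
    rw [aeval_modByMonic_eq_self_of_root (minpoly.aeval K a), map_pow, aeval_X]
  rcases eq_or_ne q 0 with hq0 | hq0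
  · simp [← hq, hq0]
  · rw [← hq, aeval_eq_sum_range' ((natDegree_lt_natDegree hq0
      (degree_modByMonic_lt _ (minpoly.monic ha))).trans_le hδ)]

theorem span_range_eq_top_of_forall_sum_dotProduct_eq_zero {K α ι κ : Type*} [Field K]
    [Fintype ι] [Fintype κ] (v : α → ι → κ → K)
    (h : ∀ ξ : ι → κ → K, (∀ a, ∑ k, ξ k ⬝ᵥ v a k = 0) → ξ = 0) :
    Submodule.span K (Set.range v) = ⊤ := by
  classical
  refine Submodule.eq_top_iff'.2 fun w => by_contra fun hw => ?_
  obtain ⟨f, hfw, hf⟩ := Submodule.exists_dual_map_eq_bot_of_notMem hw inferInstance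
  set ξ : ι → κ → K := fun k =>
    (dotProductEquiv K κ).symm (f ∘ₗ LinearMap.single K (fun _ : ι => κ → K) k)
  have hfξ : ∀ z, f z = ∑ k, ξ k ⬝ᵥ z k := fun z => by
    conv_lhs => rw [← Finset.univ_sum_single z]
    simp only [map_sum, ξ, ← dotProductEquiv_apply_apply, LinearEquiv.apply_symm_apply]
    rfl
  have hξ : ξ = 0 := h ξ fun a => by
    rw [← hfξ]
    exact (Submodule.mem_bot K).1 (hf ▸ Submodule.mem_map_of_mem (Submodule.subset_span ⟨a, rfl⟩))
  exact hfw (by simp [hfξ, hξ])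

section StateTrajectory

variable {R ι κ : Type*} [CommRing R] [Fintype ι] [Fintype κ]

theorem mulVec_add_mulVec_sum_smul {ρ α : Type*} (M : Matrix ρ ι R) (P : Matrix ρ κ R)
    (S : Finset α) (g : α → R) (v : α → ι → R) (w : α → κ → R) :
    M *ᵥ (∑ a ∈ S, g a • v a) + P *ᵥ (∑ a ∈ S, g a • w a) =
      ∑ a ∈ S, g a • (M *ᵥ v a + P *ᵥ w a) := by
  simp only [mulVec_sum, mulVec_smul, smul_add, sum_add_distrib]

/-- Only the states `x 0, …, x (N - 1)` are constrained; the input `u (N - 1)` plays no role. -/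
def IsStateTrajectory (A : Matrix ι ι R) (B : Matrix ι κ R) (N : ℕ) (u : ℕ → κ → R)
    (x : ℕ → ι → R) : Prop :=
  ∀ s, s + 1 < N → x (s + 1) = A *ᵥ x s + B *ᵥ u s

namespace IsStateTrajectory

variable {A : Matrix ι ι R} {B : Matrix ι κ R} {N : ℕ} {u u' : ℕ → κ → R} {x x' : ℕ → ι → R}

theorem shift (h : IsStateTrajectory A B N u x) {c M : ℕ} (hc : c + M ≤ N) :
    IsStateTrajectory A B M (fun s => u (c + s)) (fun s => x (c + s)) :=
  fun s hs => h (c + s) (by omega)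

theorem sum_smul {α : Type*} (S : Finset α) (g : α → R) {u : α → ℕ → κ → R}
    {x : α → ℕ → ι → R} (h : ∀ a ∈ S, IsStateTrajectory A B N (u a) (x a)) :
    IsStateTrajectory A B N (∑ a ∈ S, g a • u a) (∑ a ∈ S, g a • x a) := by
  intro s hs
  simp only [Finset.sum_apply, Pi.smul_apply, mulVec_add_mulVec_sum_smul]
  exact sum_congr rfl fun a ha => by rw [h a ha s hs]

theorem sub (h : IsStateTrajectory A B N u x) (h' : IsStateTrajectory A B N u' x') :
    IsStateTrajectory A B N (u - u') (x - x') := fun s hs => by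
  simp only [Pi.sub_apply, h s hs, h' s hs, mulVec_sub]
  abel

theorem congr_input (h : IsStateTrajectory A B N u x) (hu : ∀ s, s + 1 < N → u s = u' s) :
    IsStateTrajectory A B N u' x :=
  fun s hs => hu s hs ▸ h s hs

theorem eq_pow_mulVec_of_input_eq_zero [DecidableEq ι] (h : IsStateTrajectory A B N u x)
    (hu : ∀ s, s + 1 < N → u s = 0) : ∀ j, j < N → x j = (A ^ j) *ᵥ x 0
  | 0, _ => by simp
  | j + 1, hj => by
    rw [h j hj, hu j hj, eq_pow_mulVec_of_input_eq_zero h hu j (by omega), mulVec_zero, add_zero,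
      mulVec_mulVec, pow_succ']

theorem eq_of_input_eq (h : IsStateTrajectory A B N u x) (h' : IsStateTrajectory A B N u' x')
    (hu : ∀ s, s + 1 < N → u s = u' s) (h0 : x 0 = x' 0) {j : ℕ} (hj : j < N) : x j = x' j := by
  classical
  have := (h.sub h').eq_pow_mulVec_of_input_eq_zero (fun s hs => sub_eq_zero.2 (hu s hs)) j hj
  rwa [Pi.sub_apply, Pi.sub_apply, h0, sub_self, mulVec_zero, sub_eq_zero] at this

end IsStateTrajectory

end StateTrajectory

section ExtendedWindow

variable {R ι κ : Type*} [CommRing R]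

/-- The `s`-th column of the stacked Hankel matrix of `x` (depth `1`) and `u` (depth `L`). -/
def extWindow (L s : ℕ) : (ℕ → ι → R) × (ℕ → κ → R) →ₗ[R] (ι → R) × (Fin L → κ → R) :=
  (LinearMap.proj s).prodMap (LinearMap.funLeft R (κ → R) fun k : Fin L => s + k)

@[simp]
theorem extWindow_apply (L s : ℕ) (τ : (ℕ → ι → R) × (ℕ → κ → R)) :
    extWindow L s τ = (τ.1 s, fun k : Fin L => τ.2 (s + k)) :=
  rfl

theorem extWindow_shift (L r j : ℕ) (x : ℕ → ι → R) (u : ℕ → κ → R) :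
    extWindow L j (fun s => x (r + s), fun s => u (r + s)) = extWindow L (r + j) (x, u) := by
  simp [add_assoc]

def extWindowRecurrence (c : ℕ → R) (L δ : ℕ) :
    (ℕ → ι → R) × (ℕ → κ → R) →ₗ[R] (ι → R) × (Fin L → κ → R) :=
  extWindow L δ - ∑ j ∈ range δ, c j • extWindow L j

theorem extWindowRecurrence_shift (c : ℕ → R) (L δ r : ℕ) (x : ℕ → ι → R) (u : ℕ → κ → R) :
    extWindowRecurrence c L δ (fun s => x (r + s), fun s => u (r + s)) =
      extWindow L (r + δ) (x, u) - ∑ j ∈ range δ, c j • extWindow L (r + j) (x, u) := by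
  simp only [extWindowRecurrence, LinearMap.sub_apply, LinearMap.coe_sum, Finset.sum_apply,
    LinearMap.smul_apply, extWindow_shift]

variable [Fintype ι] [Fintype κ] [DecidableEq ι] {A : Matrix ι ι R} {B : Matrix ι κ R}
  {c : ℕ → R} {L δ : ℕ}

theorem extWindowRecurrence_eq_zero (hc : A ^ δ = ∑ j ∈ range δ, c j • A ^ j) (hL : 0 < L)
    {u : ℕ → κ → R} {x : ℕ → ι → R} (h : IsStateTrajectory A B (δ + L) u x)
    (hu : ∀ s, s < δ + L → u s = 0) :
    extWindowRecurrence c L δ (x, u) = 0 := by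
  have hx : ∀ j ≤ δ, x j = (A ^ j) *ᵥ x 0 := fun j hj =>
    h.eq_pow_mulVec_of_input_eq_zero (fun s hs => hu s (by omega)) j (by omega)
  refine Prod.ext ?_ (funext fun k => ?_)
  · have hsum : ∑ j ∈ range δ, c j • x j = (∑ j ∈ range δ, c j • A ^ j) *ᵥ x 0 := by
      rw [sum_mulVec]
      exact sum_congr rfl fun j hj => by rw [hx j (mem_range_le hj), smul_mulVec]
    simp [extWindowRecurrence, Prod.fst_sum, hsum, ← hc, hx δ le_rfl]
  · have hwin : ∀ j ≤ δ, u (j + k) = 0 := fun j hj => hu _ (by omega)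
    have hsum : ∑ j ∈ range δ, c j • u (j + k) = 0 :=
      sum_eq_zero fun j hj => by rw [hwin j (mem_range_le hj), smul_zero]
    simp [extWindowRecurrence, Prod.snd_sum, Finset.sum_apply, hwin δ le_rfl, hsum]

variable {N T : ℕ} {u : ℕ → κ → R} {x : ℕ → ι → R}

theorem extWindowRecurrence_shift_mem_span (hc : A ^ δ = ∑ j ∈ range δ, c j • A ^ j)
    (hL : 0 < L) (hδLT : δ + L ≤ T) (hTN : T ≤ N) (h : IsStateTrajectory A B N u x)
    (hpe : Submodule.span R (Set.range fun a : Fin (T - (δ + L) + 1) =>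
      fun k : Fin (δ + L) => u (a + k)) = ⊤)
    {r : ℕ} (hr : r + (δ + L) ≤ N) :
    extWindowRecurrence c L δ (fun s => x (r + s), fun s => u (r + s)) ∈
      Submodule.span R (Set.range fun a : Fin (T - L + 1) => extWindow L a (x, u)) := by
  obtain ⟨g, hg⟩ := (Submodule.mem_span_range_iff_exists_fun R).1
    (hpe ▸ Submodule.mem_top (x := fun k : Fin (δ + L) => u (r + k)))
  set τ : Fin (T - (δ + L) + 1) → (ℕ → ι → R) × (ℕ → κ → R) :=
    fun a => (fun s => x (a + s), fun s => u (a + s))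
  -- the shift by `r` minus the matching combination of the shifts by `a` has zero input
  have hdiff := extWindowRecurrence_eq_zero hc hL
    ((h.shift hr).sub (IsStateTrajectory.sum_smul univ g (u := fun a s => u (a + s))
      (x := fun a s => x (a + s)) fun a _ => h.shift (by omega)))
    (fun s hs => by simpa [Finset.sum_apply, sub_eq_zero] using (congrFun hg ⟨s, hs⟩).symm)
  have hcomb : extWindowRecurrence c L δ (fun s => x (r + s), fun s => u (r + s)) =
      ∑ a, g a • extWindowRecurrence c L δ (τ a) := by
    rw [← sub_eq_zero]
    simp_rw [← map_smul, ← map_sum, ← map_sub]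
    convert hdiff using 2
    ext <;> simp [τ, Prod.fst_sum, Prod.snd_sum, Finset.sum_apply]
  rw [hcomb]
  refine Submodule.sum_mem _ fun a _ => Submodule.smul_mem _ _ ?_
  rw [extWindowRecurrence_shift]
  exact Submodule.sub_mem _ (Submodule.subset_span ⟨⟨a + δ, by omega⟩, rfl⟩)
    (Submodule.sum_mem _ fun j hj => Submodule.smul_mem _ _
      (Submodule.subset_span ⟨⟨a + j, by have := mem_range.1 hj; omega⟩, rfl⟩))

theorem extWindow_mem_span (hc : A ^ δ = ∑ j ∈ range δ, c j • A ^ j)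
    (hL : 0 < L) (hδLT : δ + L ≤ T) (hTN : T ≤ N) (h : IsStateTrajectory A B N u x)
    (hpe : Submodule.span R (Set.range fun a : Fin (T - (δ + L) + 1) =>
      fun k : Fin (δ + L) => u (a + k)) = ⊤)
    {s : ℕ} (hs : s + L ≤ N) :
    extWindow L s (x, u) ∈
      Submodule.span R (Set.range fun a : Fin (T - L + 1) => extWindow L a (x, u)) := by
  induction s using Nat.strong_induction_on with
  | _ s ih =>
  by_cases hsT : s + L ≤ T
  · exact Submodule.subset_span ⟨⟨s, by omega⟩, rfl⟩
  obtain ⟨r, rfl⟩ : ∃ r, s = r + δ := ⟨s - δ, by omega⟩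
  have hw : extWindow L (r + δ) (x, u) =
      extWindowRecurrence c L δ (fun s => x (r + s), fun s => u (r + s)) +
        ∑ j ∈ range δ, c j • extWindow L (r + j) (x, u) := by
    rw [extWindowRecurrence_shift, sub_add_cancel]
  rw [hw]
  exact add_mem (extWindowRecurrence_shift_mem_span hc hL hδLT hTN h hpe (by omega))
    (Submodule.sum_mem _ fun j hj => Submodule.smul_mem _ _
      (ih _ (by have := mem_range.1 hj; omega) (by have := mem_range.1 hj; omega)))

end ExtendedWindow

theorem online_deepc_correct_general
    (n m p K T L δ : ℕ) (hL : 0 < L)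
    (A : Matrix (Fin n) (Fin n) ℝ) (B : Matrix (Fin n) (Fin m) ℝ)
    (C : Matrix (Fin p) (Fin n) ℝ) (D : Matrix (Fin p) (Fin m) ℝ)
    (u : ℕ → Fin m → ℝ) (y : ℕ → Fin p → ℝ) (x : ℕ → Fin n → ℝ)
    (hx : ∀ s, s + 1 < K → x (s + 1) = A.mulVec (x s) + B.mulVec (u s))
    (hy : ∀ s, s < K → y s = C.mulVec (x s) + D.mulVec (u s))
    (hδ : (minpoly ℝ A).natDegree ≤ δ)
    (hTK : T ≤ K) (hδLT : δ + L ≤ T)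
    -- persistency of excitation of order δ + L of u_{[0,T-1]}
    (hpe : ∀ ξ : Fin (δ + L) → Fin m → ℝ,
      (∀ c : ℕ, c + (δ + L) ≤ T →
        ∑ k : Fin (δ + L), ξ k ⬝ᵥ u (c + k) = 0) → ξ = 0) :
    (∀ t, t + L ≤ K → ∃ g : Fin (T - L + 1) → ℝ,
      (∀ k : Fin L, u (t + k) = ∑ c : Fin (T - L + 1), g c • u (c + k)) ∧
      (∀ k : Fin L, y (t + k) = ∑ c : Fin (T - L + 1), g c • y (c + k))) ∧
    (∀ (ubar : ℕ → Fin m → ℝ) (ybar : ℕ → Fin p → ℝ)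
        (g : Fin (T - L + 1) → ℝ),
      (∀ k : Fin L, ubar k = ∑ c : Fin (T - L + 1), g c • u (c + k)) →
      (∀ k : Fin L, ybar k = ∑ c : Fin (T - L + 1), g c • y (c + k)) →
      ∃ xbar : ℕ → Fin n → ℝ,
        (∀ s, s + 1 < L →
          xbar (s + 1) = A.mulVec (xbar s) + B.mulVec (ubar s)) ∧
        (∀ s, s < L → ybar s = C.mulVec (xbar s) + D.mulVec (ubar s))) := by
  obtain ⟨c, hc⟩ :=
    exists_pow_eq_sum_smul_pow_of_natDegree_minpoly_le (IsIntegral.of_finite ℝ A) hδ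
  have htraj : IsStateTrajectory A B K u x := hx
  have hcol : ∀ a : Fin (T - L + 1), (a : ℕ) + L ≤ K := fun a => by omega
  have hcomb_traj (g : Fin (T - L + 1) → ℝ) := IsStateTrajectory.sum_smul univ g
    (u := fun (a : Fin (T - L + 1)) s => u (a + s)) (x := fun (a : Fin (T - L + 1)) s => x (a + s))
    fun a _ => htraj.shift (hcol a)
  have hcomb_y (g : Fin (T - L + 1) → ℝ) {s : ℕ} (hs : s < L) :
      ∑ a, g a • y (a + s) = C *ᵥ ∑ a, g a • x (a + s) + D *ᵥ ∑ a, g a • u (a + s) := by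
    rw [mulVec_add_mulVec_sum_smul]
    exact sum_congr rfl fun a _ => by rw [hy _ (by have := hcol a; omega)]
  refine ⟨fun t ht => ?_, fun ubar ybar g hu hy' => ?_⟩
  · have hspan := span_range_eq_top_of_forall_sum_dotProduct_eq_zero
      (fun (a : Fin (T - (δ + L) + 1)) (k : Fin (δ + L)) => u (a + k))
      fun ξ hξ => hpe ξ fun a ha => hξ ⟨a, by omega⟩
    obtain ⟨g, hg⟩ := (Submodule.mem_span_range_iff_exists_fun ℝ).1
      (extWindow_mem_span hc hL hδLT hTK htraj hspan ht)
    have hu : ∀ k : Fin L, u (t + k) = ∑ a, g a • u (a + k) := fun k => by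
      simpa [Finset.sum_apply, Prod.snd_sum] using (congrFun (congrArg Prod.snd hg) k).symm
    have hx0 : x t = ∑ a, g a • x a := by
      simpa [Prod.fst_sum] using (congrArg Prod.fst hg).symm
    have hxk : ∀ k : Fin L, x (t + k) = ∑ a, g a • x (a + k) := fun k => by
      simpa [Finset.sum_apply] using (htraj.shift ht).eq_of_input_eq (hcomb_traj g)
        (fun s hs => by simpa [Finset.sum_apply] using hu ⟨s, by omega⟩)
        (by simpa [Finset.sum_apply] using hx0) k.isLt
    refine ⟨g, hu, fun k => ?_⟩
    rw [hy _ (by omega), hxk, hu, hcomb_y g k.isLt]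
  · refine ⟨∑ a, g a • fun s => x (a + s), ?_, fun s hs => ?_⟩
    · refine (hcomb_traj g).congr_input fun s hs => ?_
      simpa [Finset.sum_apply] using (hu ⟨s, by omega⟩).symm
    · rw [show s = ((⟨s, hs⟩ : Fin L) : ℕ) from rfl, hy', hu, hcomb_y g hs]
      simp [Finset.sum_apply]

/-- online DeePC correctness: any length-L window of an
input-output trajectory is parameterizable by its first length-T segment
(given persistency of excitation of order δ + L, δ ≥ deg minpoly A), and
conversely anything parameterizable is an input-output trajectory. -/
theorem online_deepc_correct
    (n m p K T L δ : ℕ) (hL : 0 < L) (hδpos : 0 < δ)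
    (A : Matrix (Fin n) (Fin n) ℝ) (B : Matrix (Fin n) (Fin m) ℝ)
    (C : Matrix (Fin p) (Fin n) ℝ) (D : Matrix (Fin p) (Fin m) ℝ)
    (u : ℕ → Fin m → ℝ) (y : ℕ → Fin p → ℝ) (x : ℕ → Fin n → ℝ)
    (hx : ∀ s, s + 1 < K → x (s + 1) = A.mulVec (x s) + B.mulVec (u s))
    (hy : ∀ s, s < K → y s = C.mulVec (x s) + D.mulVec (u s))
    (hδ : (minpoly ℝ A).natDegree ≤ δ)
    (hLT : L ≤ T) (hTK : T ≤ K) (hδLT : δ + L ≤ T)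
    -- persistency of excitation of order δ + L of u_{[0,T-1]}
    (hpe : ∀ ξ : Fin (δ + L) → Fin m → ℝ,
      (∀ c : ℕ, c + (δ + L) ≤ T →
        ∑ k : Fin (δ + L), ξ k ⬝ᵥ u (c + k) = 0) → ξ = 0) :
    (∀ t, t + L ≤ K → ∃ g : Fin (T - L + 1) → ℝ,
      (∀ k : Fin L, u (t + k) = ∑ c : Fin (T - L + 1), g c • u (c + k)) ∧
      (∀ k : Fin L, y (t + k) = ∑ c : Fin (T - L + 1), g c • y (c + k))) ∧
    (∀ (ubar : ℕ → Fin m → ℝ) (ybar : ℕ → Fin p → ℝ)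
        (g : Fin (T - L + 1) → ℝ),
      (∀ k : Fin L, ubar k = ∑ c : Fin (T - L + 1), g c • u (c + k)) →
      (∀ k : Fin L, ybar k = ∑ c : Fin (T - L + 1), g c • y (c + k)) →
      ∃ xbar : ℕ → Fin n → ℝ,
        (∀ s, s + 1 < L →
          xbar (s + 1) = A.mulVec (xbar s) + B.mulVec (ubar s)) ∧
        (∀ s, s < L → ybar s = C.mulVec (xbar s) + D.mulVec (ubar s))) :=
  online_deepc_correct_general n m p K T L δ hL A B C D u y x hx hy hδ hTK hδLT hpe
end
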